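/- The count N(d;2,0,0) of 2×2×2 non-negative integer arrays of total sum d and weight (2,0,0) satisfies: if d ≡ 0 (mod 4) then 384 · N(d;2,0,0) = d(d+4)²(d+8); if d ≡ 2 (mod 4) then 384 · N(d;2,0,0) = (d+2)(d+6)(d²+8d+4); and if d is odd then N(d;2,0,0) = 0. -/

import Mathlib

/-!
Write `d = 2m`. The column sums `c j k = e (0, j, k) + e (1, j, k)` form a 2×2 matrix whose rows
and columns all add up to `m`, so `c = [[u, m - u], [m - u, u]]` for some `u ≤ m`, and the array is
then determined by the entries `e (0, j, k) ≤ c j k`, which must add up to `m + 1`. Hence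
`N(2m; 2, 0, 0) = ∑_{u ≤ m} B(u, m - u)`, where `B(u, v) = #(boxQuads u v)` counts the points of
`[0, u]² × [0, v]²` with coordinate sum `u + v + 1`. For `u ≤ v`, raising `v` by one adds exactly
one such point over each point of `[0, u]²`; starting from `3 B(u, u) = 2u(u + 1)(u + 2)` this
gives `3 B(u, v) = 2u(u + 1)(u + 2) + 3(v - u)(u + 1)²`. Since `B(u, v) = B(v, u)`, the sum over
`u ≤ m` reduces to sums of these cubics over `u ≤ m / 2`. For odd `d` there are no arrays at all,
as the total sum is `2 · ∑ e (1, ·, ·) + 2`.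
-/

open Finset

/-- `N d a b c` is the number of 2×2×2 arrays of non-negative integers with total
sum `d` whose slice sums in the three directions differ by `a`, `b`, `c`
respectively; it is the dimension of the weight space `W(d;a,b,c)`. -/
noncomputable def N (d a b c : ℕ) : ℕ :=
  Set.ncard {e : Fin 2 × Fin 2 × Fin 2 → ℕ |
    (∑ i : Fin 2, ∑ j : Fin 2, ∑ k : Fin 2, e (i, j, k)) = d ∧
    (∑ j : Fin 2, ∑ k : Fin 2, e (0, j, k)) = (∑ j : Fin 2, ∑ k : Fin 2, e (1, j, k)) + a ∧
    (∑ i : Fin 2, ∑ k : Fin 2, e (i, 0, k)) = (∑ i : Fin 2, ∑ k : Fin 2, e (i, 1, k)) + b ∧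
    (∑ i : Fin 2, ∑ j : Fin 2, e (i, j, 0)) = (∑ i : Fin 2, ∑ j : Fin 2, e (i, j, 1)) + c}

lemma three_mul_sum_range_mul_succ (n : ℕ) :
    3 * ∑ t ∈ range (n + 1), t * (t + 1) = n * (n + 1) * (n + 2) := by
  induction n with
  | zero => simp
  | succ n ih => rw [sum_range_succ, mul_add, ih]; ring

lemma sum_range_eq_add_of_symm {M : Type*} [AddCommMonoid M] {f : ℕ → M} {m n : ℕ}
    (hn : n ≤ m + 1) (hf : ∀ u ≤ m, f (m - u) = f u) :
    ∑ u ∈ range (m + 1), f u = ∑ u ∈ range n, f u + ∑ u ∈ range (m + 1 - n), f u := by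
  obtain ⟨k, hk⟩ := Nat.exists_eq_add_of_le hn
  rw [hk, sum_range_add, Nat.add_sub_cancel_left, ← sum_range_reflect f k]
  refine congrArg _ (sum_congr rfl fun i hi => ?_)
  rw [mem_range] at hi
  rw [← hf (n + i) (by omega)]
  congr 1
  omega

def boxPairs (c : ℕ) : Finset (ℕ × ℕ) := range (c + 1) ×ˢ range (c + 1)

@[simp]
lemma mem_boxPairs {c : ℕ} {p : ℕ × ℕ} : p ∈ boxPairs c ↔ p.1 ≤ c ∧ p.2 ≤ c := by
  simp only [boxPairs, mem_product, mem_range, Nat.lt_succ_iff]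

def pairCount (c x : ℕ) : ℕ := #{p ∈ boxPairs c | p.1 + p.2 = x}

lemma pairCount_eq (c x : ℕ) : pairCount c x = min x c + 1 - (x - c) := by
  rw [pairCount, ← Nat.card_Icc]
  refine card_nbij' Prod.fst (fun i => (i, x - i)) ?_ ?_ ?_ ?_ <;> intro p hp <;>
    simp only [coe_filter, coe_Icc, Set.mem_ofPred_eq, Set.mem_Icc, mem_boxPairs, Prod.ext_iff,
      true_and] at hp ⊢ <;>
    omega

lemma sum_boxPairs_eq_sum_range {M : Type*} [AddCommMonoid M] (c : ℕ) (h : ℕ → M) :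
    ∑ p ∈ boxPairs c, h (p.1 + p.2) = ∑ t ∈ range (2 * c + 1), pairCount c t • h t := by
  rw [← sum_fiberwise_of_maps_to (g := fun p : ℕ × ℕ => p.1 + p.2) (t := range (2 * c + 1))
    (fun p hp => by rw [mem_boxPairs] at hp; rw [mem_range]; omega)]
  refine sum_congr rfl fun t _ => ?_
  rw [pairCount, ← sum_const]
  exact sum_congr rfl fun p hp => by rw [(mem_filter.1 hp).2]

def boxQuads (u v : ℕ) : Finset ((ℕ × ℕ) × (ℕ × ℕ)) :=
  {p ∈ boxPairs u ×ˢ boxPairs v | p.1.1 + p.1.2 + (p.2.1 + p.2.2) = u + v + 1}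

lemma mem_boxQuads {u v : ℕ} {p : (ℕ × ℕ) × (ℕ × ℕ)} :
    p ∈ boxQuads u v ↔
      (p.1 ∈ boxPairs u ∧ p.2 ∈ boxPairs v) ∧ p.1.1 + p.1.2 + (p.2.1 + p.2.2) = u + v + 1 := by
  rw [boxQuads, mem_filter, mem_product]

lemma card_boxQuads_comm (u v : ℕ) : #(boxQuads u v) = #(boxQuads v u) :=
  card_nbij' Prod.swap Prod.swap
    (fun p hp => by
      simp only [mem_coe, mem_boxQuads, mem_boxPairs, Prod.fst_swap, Prod.snd_swap] at hp ⊢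
      omega)
    (fun p hp => by
      simp only [mem_coe, mem_boxQuads, mem_boxPairs, Prod.fst_swap, Prod.snd_swap] at hp ⊢
      omega)
    (fun p _ => p.swap_swap) (fun p _ => p.swap_swap)

lemma card_boxQuads_eq_sum {u v : ℕ} (h : u ≤ v + 1) :
    #(boxQuads u v) = ∑ p ∈ boxPairs u, pairCount v (u + v + 1 - (p.1 + p.2)) := by
  rw [boxQuads, card_filter, sum_product]
  refine sum_congr rfl fun p hp => ?_
  rw [mem_boxPairs] at hp
  rw [pairCount, card_filter]
  exact sum_congr rfl fun q _ => if_congr (by dsimp only; omega) rfl rfl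

lemma card_boxQuads_succ_right {u v : ℕ} (h : u ≤ v) :
    #(boxQuads u (v + 1)) = #(boxQuads u v) + (u + 1) ^ 2 := by
  rw [card_boxQuads_eq_sum (by omega), card_boxQuads_eq_sum (by omega)]
  have hstep : ∀ p ∈ boxPairs u, pairCount (v + 1) (u + (v + 1) + 1 - (p.1 + p.2))
      = pairCount v (u + v + 1 - (p.1 + p.2)) + 1 := by
    intro p hp
    rw [mem_boxPairs] at hp
    rw [pairCount_eq, pairCount_eq]
    omega
  rw [sum_congr rfl hstep, sum_add_distrib, sum_const, boxPairs, card_product, card_range,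
    smul_eq_mul, mul_one, sq]

lemma three_mul_card_boxQuads_self (u : ℕ) :
    3 * #(boxQuads u u) = 2 * u * (u + 1) * (u + 2) := by
  set f : ℕ → ℕ := fun t => pairCount u t * pairCount u (2 * u + 1 - t)
  have hf_top : f (2 * u + 1) = 0 := by
    have : pairCount u (2 * u + 1) = 0 := by rw [pairCount_eq]; omega
    simp [f, this]
  have hf_symm : ∀ t ≤ 2 * u + 1, f (2 * u + 1 - t) = f t := fun t ht => by
    simp only [f]
    rw [mul_comm]
    congr 2
    omega
  have hf_low : ∀ t ∈ range (u + 1), f t = t * (t + 1) := fun t ht => by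
    rw [mem_range] at ht
    simp only [f, pairCount_eq]
    rw [mul_comm]
    congr 1 <;> omega
  calc 3 * #(boxQuads u u)
      = 3 * ∑ t ∈ range (2 * u + 1 + 1), f t := by
        rw [card_boxQuads_eq_sum (by omega), sum_range_succ, hf_top, add_zero,
          sum_boxPairs_eq_sum_range (h := fun s => pairCount u (u + u + 1 - s))]
        simp [f, two_mul]
    _ = 2 * (3 * ∑ t ∈ range (u + 1), t * (t + 1)) := by
        rw [sum_range_eq_add_of_symm (n := u + 1) (by omega) hf_symm,
          show 2 * u + 1 + 1 - (u + 1) = u + 1 by omega, sum_congr rfl hf_low]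
        ring
    _ = 2 * u * (u + 1) * (u + 2) := by rw [three_mul_sum_range_mul_succ]; ring

lemma three_mul_card_boxQuads (u k : ℕ) :
    3 * #(boxQuads u (u + k)) = 2 * u * (u + 1) * (u + 2) + 3 * k * (u + 1) ^ 2 := by
  induction k with
  | zero => simpa using three_mul_card_boxQuads_self u
  | succ k ih => rw [← add_assoc, card_boxQuads_succ_right (by omega), mul_add, ih]; ring

lemma six_mul_sum_card_boxQuads {m n : ℕ} (h : 2 * n ≤ m + 2) :
    6 * ∑ u ∈ range n, #(boxQuads u (m - u)) + 2 * n ^ 4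
      = m * n * (n + 1) * (2 * n + 1) + 2 * n ^ 2 := by
  induction n with
  | zero => simp
  | succ n ih =>
    obtain ⟨k, rfl⟩ : ∃ k, m = 2 * n + k := ⟨m - 2 * n, by omega⟩
    have hF := three_mul_card_boxQuads n k
    have hS := ih (by omega)
    rw [sum_range_succ, show 2 * n + k - n = n + k by omega]
    zify at hF hS ⊢
    linear_combination hS + 2 * hF

lemma N_eq_zero_of_odd_add {d a : ℕ} (b c : ℕ) (h : Odd (d + a)) : N d a b c = 0 := by
  rw [N]
  convert Set.ncard_empty (Fin 2 × Fin 2 × Fin 2 → ℕ)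
  refine Set.eq_empty_of_forall_notMem ?_
  rintro e ⟨hd, ha, -⟩
  simp only [Fin.sum_univ_two] at hd ha
  obtain ⟨k, hk⟩ := h
  omega

def arrayOf (m : ℕ) : (Σ _ : ℕ, (ℕ × ℕ) × (ℕ × ℕ)) → Fin 2 × Fin 2 × Fin 2 → ℕ
  | ⟨u, (a, b), (c, d)⟩, (i, j, k) =>
    ![![![a, c], ![d, b]], ![![u - a, m - u - c], ![m - u - d, u - b]]] i j k

lemma N_two_mul (m : ℕ) : N (2 * m) 2 0 0 = ∑ u ∈ range (m + 1), #(boxQuads u (m - u)) := by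
  rw [← card_sigma, ← Set.ncard_coe_finset, N]
  symm
  refine Set.ncard_congr (fun x _ => arrayOf m x) ?_ ?_ ?_
  · rintro ⟨u, ⟨a, b⟩, ⟨c, d⟩⟩ hx
    simp only [mem_coe, mem_sigma, mem_range, mem_boxQuads, mem_boxPairs]
      at hx
    simp only [Set.mem_ofPred_eq, arrayOf, Fin.sum_univ_two, Matrix.cons_val_zero,
      Matrix.cons_val_one]
    omega
  · rintro ⟨u, ⟨a, b⟩, ⟨c, d⟩⟩ ⟨u₂, ⟨a₂, b₂⟩, ⟨c₂, d₂⟩⟩ hx hx₂ he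
    simp only [mem_coe, mem_sigma, mem_range, mem_boxQuads, mem_boxPairs]
      at hx hx₂
    obtain ⟨rfl, rfl, rfl, rfl, hu⟩ : a = a₂ ∧ b = b₂ ∧ c = c₂ ∧ d = d₂ ∧ u - a = u₂ - a₂ :=
      ⟨congrFun he (0, 0, 0), congrFun he (0, 1, 1), congrFun he (0, 0, 1), congrFun he (0, 1, 0),
        congrFun he (1, 0, 0)⟩
    obtain rfl : u = u₂ := by omega
    rfl
  · rintro e ⟨hd, ha, hb, hc⟩
    simp only [Fin.sum_univ_two] at hd ha hb hc
    refine ⟨⟨e (0, 0, 0) + e (1, 0, 0), (e (0, 0, 0), e (0, 1, 1)), (e (0, 0, 1), e (0, 1, 0))⟩,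
      ?_, ?_⟩
    · simp only [mem_coe, mem_sigma, mem_range, mem_boxQuads, mem_boxPairs]
      omega
    · have hentries : ∀ i j k, arrayOf m ⟨e (0, 0, 0) + e (1, 0, 0), (e (0, 0, 0), e (0, 1, 1)),
          (e (0, 0, 1), e (0, 1, 0))⟩ (i, j, k) = e (i, j, k) := by
        simp only [Fin.forall_fin_two, arrayOf, Fin.isValue, Matrix.cons_val',
          Matrix.cons_val_fin_one, Matrix.cons_val_zero, Matrix.cons_val_one, add_tsub_cancel_left,
          and_self, true_and]
        omega
      exact funext fun ⟨i, j, k⟩ => hentries i j k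

lemma N_two_mul_eq_add {m n : ℕ} (hn : n ≤ m + 1) :
    N (2 * m) 2 0 0 = ∑ u ∈ range n, #(boxQuads u (m - u))
      + ∑ u ∈ range (m + 1 - n), #(boxQuads u (m - u)) := by
  refine (N_two_mul m).trans (sum_range_eq_add_of_symm hn fun u hu => ?_)
  rw [card_boxQuads_comm, Nat.sub_sub_self hu]

lemma N_four_mul (t : ℕ) : 384 * N (4 * t) 2 0 0 = 4 * t * (4 * t + 4) ^ 2 * (4 * t + 8) := by
  have hN := N_two_mul_eq_add (m := 2 * t) (n := t + 1) (by omega)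
  rw [show 2 * (2 * t) = 4 * t by ring, show 2 * t + 1 - (t + 1) = t by omega] at hN
  have h₁ := six_mul_sum_card_boxQuads (m := 2 * t) (n := t + 1) (by omega)
  have h₀ := six_mul_sum_card_boxQuads (m := 2 * t) (n := t) (by omega)
  rw [hN]
  zify at h₀ h₁ ⊢
  linear_combination 64 * h₁ + 64 * h₀

lemma N_four_mul_add_two (t : ℕ) :
    384 * N (4 * t + 2) 2 0 0
      = (4 * t + 2 + 2) * (4 * t + 2 + 6) * ((4 * t + 2) ^ 2 + 8 * (4 * t + 2) + 4) := by
  have hN := N_two_mul_eq_add (m := 2 * t + 1) (n := t + 1) (by omega)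
  rw [show 2 * (2 * t + 1) = 4 * t + 2 by ring, show 2 * t + 1 + 1 - (t + 1) = t + 1 by omega]
    at hN
  have h₁ := six_mul_sum_card_boxQuads (m := 2 * t + 1) (n := t + 1) (by omega)
  rw [hN]
  zify at h₁ ⊢
  linear_combination 128 * h₁

/-- Dimension formulas for the weight space `W(d;2,0,0)`. -/
theorem dim_weight_space_200 (d : ℕ) :
    (d % 4 = 0 → 384 * N d 2 0 0 = d * (d + 4) ^ 2 * (d + 8)) ∧
    (d % 4 = 2 → 384 * N d 2 0 0 = (d + 2) * (d + 6) * (d ^ 2 + 8 * d + 4)) ∧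
    (Odd d → N d 2 0 0 = 0) := by
  refine ⟨fun h => ?_, fun h => ?_, fun h => N_eq_zero_of_odd_add 0 0 (h.add_even even_two)⟩
  · obtain ⟨t, rfl⟩ : ∃ t, d = 4 * t := ⟨d / 4, by omega⟩
    exact N_four_mul t
  · obtain ⟨t, rfl⟩ : ∃ t, d = 4 * t + 2 := ⟨d / 4, by omega⟩
    exact N_four_mul_add_two t
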